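/- arXiv:1705.02711 — 7 statements merged into one kernel-verified Lean document; each statement's English description precedes it below -/
import Mathlib

section
/- Let ε, r ∈ (0,1) with ε + r < 1 and set C = r/((ε+r)·Γ(1−ε−r)). If a real sequence (a_t)_{t≥1} satisfies a_1 = 1 and a_{t+1} = (1 − (ε+r)/t)·a_t + ε/t for all t ≥ 1, then for every t ≥ 1, a_t = C·Γ(t−ε−r)/Γ(t) + ε/(ε+r). -/
/-! Subtracting the fixed point `ε/(ε+r)` turns the recurrence into the homogeneous one
`b_{t+1} = (1 - (ε+r)/t) b_t`, and `Γ(t+1) = t Γ(t)` shows that `t ↦ Γ(t - ε - r)/Γ(t)` solves it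
as well. Both solutions take the value `r/(ε+r)` at `t = 1`, so they coincide. -/

open Real

theorem eq_of_recurrence {α : Type*} (f : ℕ → α → α) {u v : ℕ → α}
    (hu : ∀ t, 1 ≤ t → u (t + 1) = f t (u t)) (hv : ∀ t, 1 ≤ t → v (t + 1) = f t (v t))
    (h1 : u 1 = v 1) : ∀ t, 1 ≤ t → u t = v t := by
  intro t ht
  induction t, ht using Nat.le_induction with
  | base => exact h1
  | succ t ht ih => rw [hu t ht, hv t ht, ih]

theorem Real.Gamma_add_one_sub_div_Gamma_add_one {s t : ℝ} (ht : t ≠ 0) (hts : t - s ≠ 0) :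
    Gamma (t + 1 - s) / Gamma (t + 1) = (1 - s / t) * (Gamma (t - s) / Gamma t) := by
  rw [add_sub_right_comm, Gamma_add_one hts, Gamma_add_one ht, mul_div_mul_comm, one_sub_div ht]

theorem affine_recurrence_sub_fixedPoint {s ε : ℝ} (hs : s ≠ 0) {a : ℕ → ℝ}
    (hrec : ∀ t : ℕ, 1 ≤ t → a (t + 1) = (1 - s / t) * a t + ε / t) :
    ∀ t : ℕ, 1 ≤ t → a (t + 1) - ε / s = (1 - s / t) * (a t - ε / s) := by
  intro t ht
  rw [hrec t ht]
  field_simp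
  ring

theorem erws_sigma_sq_formula (ε r : ℝ) (hε : ε ∈ Set.Ioo (0:ℝ) 1)
    (hr : r ∈ Set.Ioo (0:ℝ) 1) (hsum : ε + r < 1)
    (C : ℝ) (hC : C = r / ((ε + r) * Real.Gamma (1 - ε - r)))
    (a : ℕ → ℝ) (ha1 : a 1 = 1)
    (hrec : ∀ t : ℕ, 1 ≤ t → a (t + 1) = (1 - (ε + r) / t) * a t + ε / t) :
    ∀ t : ℕ, 1 ≤ t →
      a t = C * Real.Gamma ((t : ℝ) - ε - r) / Real.Gamma (t : ℝ) + ε / (ε + r) := by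
  simp only [sub_sub] at hC ⊢
  set s := ε + r
  have hs : 0 < s := add_pos hε.1 hr.1
  have hΓ : Gamma (1 - s) ≠ 0 := (Gamma_pos_of_pos (by linarith)).ne'
  have hGamma_rec (t : ℕ) (ht : 1 ≤ t) :
      C * (Gamma ((t + 1 : ℕ) - s) / Gamma (t + 1 : ℕ)) =
        (1 - s / t) * (C * (Gamma (t - s) / Gamma t)) := by
    have ht' : (1 : ℝ) ≤ t := by exact_mod_cast ht
    push_cast
    rw [Gamma_add_one_sub_div_Gamma_add_one (by positivity) (by linarith), mul_left_comm]
  have hinit : a 1 - ε / s = C * (Gamma ((1 : ℕ) - s) / Gamma (1 : ℕ)) := by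
    rw [ha1, hC, Nat.cast_one, Gamma_one]
    field_simp
    ring
  intro t ht
  have hsol := eq_of_recurrence (fun t x => (1 - s / t) * x) (u := fun t => a t - ε / s)
    (v := fun t : ℕ => C * (Gamma (t - s) / Gamma t))
    (affine_recurrence_sub_fixedPoint hs.ne' hrec) hGamma_rec hinit t ht
  rw [← mul_div_assoc] at hsol
  linarith
end

section
/- Let ε, r ∈ (0,1) with ε + r < 1, let γ ∈ (0,1) with γ ≠ 1/2 and 2γ ≠ 1−ε−r, and set C = r/((ε+r)·Γ(1−ε−r)) and D = −(1/Γ(2γ))·[ε/((ε+r)(1−2γ)) + r/((ε+r)(1−ε−r−2γ))]. If a real sequence (y_t)_{t≥1} satisfies y_1 = 1 and y_{t+1} = (1 + 2γ/t)·y_t + C·Γ(t+1−ε−r)/Γ(t+1) + ε/(ε+r) for all t ≥ 1, then for every t ≥ 1, y_t = ε·t/((1−2γ)(ε+r)) + (C/(1−ε−r−2γ))·Γ(t+1−ε−r)/Γ(t) + D·Γ(t+2γ)/Γ(t). -/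
/-!
Write `a = 1 - ε - r`, `c = 2γ` and `gammaRatio a t = Γ(t + a) / Γ(t)`. Since
`Γ(s + 1) = s Γ(s)`, the ratio satisfies `gammaRatio a (t + 1) = (1 + a / t) gammaRatio a t`, so
`gammaRatio c` solves the homogeneous recurrence `z (t + 1) = (1 + c / t) z t`, a multiple of
`gammaRatio a` absorbs the Gamma forcing term and a multiple of `t` absorbs the constant one.
The constant `D` in front of the homogeneous solution is the one that makes the value at `t = 1`
equal to `1`, and a first-order recurrence is determined by its initial value.
-/

open Real

noncomputable def gammaRatio (a s : ℝ) : ℝ := Gamma (s + a) / Gamma s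

lemma gammaRatio_add_one {a s : ℝ} (hs : s ≠ 0) (hsa : s + a ≠ 0) :
    gammaRatio a (s + 1) = (1 + a / s) * gammaRatio a s := by
  rw [gammaRatio, gammaRatio, add_right_comm, Gamma_add_one hsa, Gamma_add_one hs,
    mul_div_mul_comm, add_div, div_self hs]

lemma gammaRatio_one {a : ℝ} (ha : a ≠ 0) : gammaRatio a 1 = a * Gamma a := by
  rw [gammaRatio, Gamma_one, div_one, add_comm, Gamma_add_one ha]

lemma linear_solution_add_one {b c s : ℝ} (hc : c ≠ 1) (hs : s ≠ 0) :
    b / (1 - c) * (s + 1) = (1 + c / s) * (b / (1 - c) * s) + b := by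
  have : 1 - c ≠ 0 := sub_ne_zero.mpr hc.symm
  field_simp
  ring

lemma forced_solution_add_one {a c K s : ℝ} (hac : a ≠ c) (hs : 0 < s) (hsa : s + a ≠ 0) :
    K / (a - c) * gammaRatio a (s + 1)
      = (1 + c / s) * (K / (a - c) * gammaRatio a s) + K * Gamma (s + a) / Gamma (s + 1) := by
  have : a - c ≠ 0 := sub_ne_zero.mpr hac
  have hΓ : Gamma s ≠ 0 := (Gamma_pos_of_pos hs).ne'
  rw [gammaRatio_add_one hs.ne' hsa, Gamma_add_one hs.ne', gammaRatio]
  field_simp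
  ring

noncomputable def closedForm (a b c K D s : ℝ) : ℝ :=
  b / (1 - c) * s + K / (a - c) * gammaRatio a s + D * gammaRatio c s

lemma closedForm_add_one {a b c K D s : ℝ} (hc : c ≠ 1) (hac : a ≠ c) (hs : 0 < s)
    (hsa : s + a ≠ 0) (hsc : s + c ≠ 0) :
    closedForm a b c K D (s + 1)
      = (1 + c / s) * closedForm a b c K D s + K * Gamma (s + a) / Gamma (s + 1) + b := by
  rw [closedForm, closedForm, linear_solution_add_one hc hs.ne', forced_solution_add_one hac hs hsa,
    gammaRatio_add_one hs.ne' hsc]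
  ring

lemma closedForm_one {a b c K D : ℝ} (ha : a ≠ 0) (hc : c ≠ 0) :
    closedForm a b c K D 1 = b / (1 - c) + K / (a - c) * (a * Gamma a) + D * (c * Gamma c) := by
  rw [closedForm, gammaRatio_one ha, gammaRatio_one hc, mul_one]

theorem eq_closedForm_of_recurrence {a b c K D : ℝ} (ha : -1 < a) (hc : -1 < c) (hc1 : c ≠ 1)
    (hac : a ≠ c) {y : ℕ → ℝ} (hy1 : y 1 = closedForm a b c K D 1)
    (hrec : ∀ t : ℕ, 1 ≤ t →
      y (t + 1) = (1 + c / t) * y t + K * Gamma (t + a) / Gamma (t + 1) + b) :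
    ∀ t : ℕ, 1 ≤ t → y t = closedForm a b c K D t := by
  intro t ht
  induction t, ht using Nat.le_induction with
  | base => exact_mod_cast hy1
  | succ t ht ih =>
    have hs : (1 : ℝ) ≤ t := by exact_mod_cast ht
    rw [hrec t ht, ih, Nat.cast_succ,
      closedForm_add_one hc1 hac (by linarith) (by linarith) (by linarith)]

theorem erws_second_moment_formula (ε r γ : ℝ) (hε : ε ∈ Set.Ioo (0:ℝ) 1)
    (hr : r ∈ Set.Ioo (0:ℝ) 1) (hsum : ε + r < 1)
    (hγ : γ ∈ Set.Ioo (0:ℝ) 1) (hγhalf : γ ≠ 1 / 2) (hγres : 2 * γ ≠ 1 - ε - r)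
    (C D : ℝ) (hC : C = r / ((ε + r) * Real.Gamma (1 - ε - r)))
    (hD : D = -(1 / Real.Gamma (2 * γ)) *
      (ε / ((ε + r) * (1 - 2 * γ)) + r / ((ε + r) * (1 - ε - r - 2 * γ))))
    (y : ℕ → ℝ) (hy1 : y 1 = 1)
    (hrec : ∀ t : ℕ, 1 ≤ t → y (t + 1) = (1 + 2 * γ / t) * y t
      + C * Real.Gamma ((t : ℝ) + 1 - ε - r) / Real.Gamma ((t : ℝ) + 1) + ε / (ε + r)) :
    ∀ t : ℕ, 1 ≤ t →
      y t = ε * t / ((1 - 2 * γ) * (ε + r))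
        + (C / (1 - ε - r - 2 * γ)) * Real.Gamma ((t : ℝ) + 1 - ε - r) / Real.Gamma (t : ℝ)
        + D * (Real.Gamma ((t : ℝ) + 2 * γ) / Real.Gamma (t : ℝ)) := by
  obtain ⟨hε0, -⟩ := hε
  obtain ⟨hr0, -⟩ := hr
  obtain ⟨hγ0, -⟩ := hγ
  have ha : 0 < 1 - ε - r := by linarith
  have hc1 : 2 * γ ≠ 1 := fun h => hγhalf (by linarith)
  have hεr : ε + r ≠ 0 := by positivity
  have h1c : 1 - 2 * γ ≠ 0 := sub_ne_zero.mpr hc1.symm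
  have hac : 1 - ε - r - 2 * γ ≠ 0 := sub_ne_zero.mpr hγres.symm
  have hΓa : Gamma (1 - ε - r) ≠ 0 := (Gamma_pos_of_pos ha).ne'
  have hΓc : Gamma (2 * γ) ≠ 0 := (Gamma_pos_of_pos (by linarith)).ne'
  have hinit : y 1 = closedForm (1 - ε - r) (ε / (ε + r)) (2 * γ) C D 1 := by
    rw [hy1, closedForm_one ha.ne' (by positivity), hC, hD]
    field_simp
    ring
  simp only [add_sub_assoc] at hrec ⊢
  intro t ht
  rw [eq_closedForm_of_recurrence (by linarith) (by linarith) hc1 hγres.symm hinit hrec t ht,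
    closedForm, gammaRatio, gammaRatio]
  field_simp
end

section
/- Let ε, r ∈ (0,1) with ε + r < 1, let γ ∈ (0,1/2) with 2γ ≠ 1−ε−r, and set C = r/((ε+r)·Γ(1−ε−r)). If a real sequence (y_t)_{t≥1} satisfies y_1 = 1 and y_{t+1} = (1 + 2γ/t)·y_t + C·Γ(t+1−ε−r)/Γ(t+1) + ε/(ε+r) for all t ≥ 1, then lim_{t→∞} y_t / t = ε/((1−2γ)(ε+r)). -/
/-!
Write `L = ε / ((1 - 2γ)(ε + r))` and `v_t = y_t / t - L`. The recurrence turns into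
`v_{t+1} = (1 - (1 - 2γ)/(t+1)) v_t + h_t/(t+1)`, where `h_t` is the Gamma term. A sequence damped
by factors `1 - c/(t+1)` with `c > 0` tends to `0`, because `∏ (1 - c/(t+1)) ≤ exp (-c ∑ 1/(t+1))`
and the harmonic series diverges; perturbations `h_t/(t+1)` with `h_t → 0` only shift it by an
arbitrarily small amount. The Gamma ratio itself satisfies `h_{t+1} = (1 - (ε+r)/(t+1)) h_t`, so
it tends to `0` by the same damping.
-/

open Real Filter Topology Finset

theorem tendsto_sum_range_one_div_add_nat_succ_atTop (N : ℕ) :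
    Tendsto (fun n => ∑ k ∈ range n, (1 / ((N + k : ℕ) + 1) : ℝ)) atTop atTop := by
  have h := tendsto_atTop_add_const_right _ (-∑ i ∈ range N, (1 / (i + 1) : ℝ))
    (tendsto_sum_range_one_div_nat_succ_atTop.comp (tendsto_add_atTop_nat N))
  refine h.congr fun n => ?_
  simp only [Function.comp_apply, add_comm n N, sum_range_add]
  ring

theorem eventually_one_sub_div_nat_succ_nonneg (c : ℝ) :
    ∀ᶠ t : ℕ in atTop, 0 ≤ 1 - c / (t + 1) := by
  filter_upwards [tendsto_natCast_atTop_atTop.eventually_ge_atTop c] with t ht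
  rw [sub_nonneg, div_le_one (by positivity)]
  linarith

theorem tendsto_zero_of_le_one_sub_div_mul {c : ℝ} (hc : 0 < c) {w : ℕ → ℝ}
    (hw0 : ∀ᶠ t in atTop, 0 ≤ w t)
    (hw : ∀ᶠ t : ℕ in atTop, w (t + 1) ≤ (1 - c / (t + 1)) * w t) :
    Tendsto w atTop (𝓝 0) := by
  obtain ⟨N, hN⟩ := eventually_atTop.1 (hw0.and hw)
  have bound : ∀ n, w (N + n) ≤ w N * exp (-(c * ∑ k ∈ range n, 1 / ((N + k : ℕ) + 1 : ℝ))) := by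
    intro n
    induction n with
    | zero => simp
    | succ n ih =>
      obtain ⟨hpos, hstep⟩ := hN (N + n) (Nat.le_add_right N n)
      have hdamp : 1 - c / ((N + n : ℕ) + 1 : ℝ) ≤ exp (-(c / ((N + n : ℕ) + 1))) := by
        linarith [add_one_le_exp (-(c / ((N + n : ℕ) + 1 : ℝ)))]
      calc w (N + (n + 1)) ≤ (1 - c / ((N + n : ℕ) + 1 : ℝ)) * w (N + n) := hstep
        _ ≤ exp (-(c / ((N + n : ℕ) + 1))) * w (N + n) := by gcongr
        _ ≤ exp (-(c / ((N + n : ℕ) + 1))) *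
              (w N * exp (-(c * ∑ k ∈ range n, 1 / ((N + k : ℕ) + 1 : ℝ)))) := by gcongr
        _ = w N * exp (-(c * ∑ k ∈ range (n + 1), 1 / ((N + k : ℕ) + 1 : ℝ))) := by
          rw [sum_range_succ, mul_left_comm, ← exp_add]
          ring_nf
  have hlim : Tendsto (fun n => w N * exp (-(c * ∑ k ∈ range n, 1 / ((N + k : ℕ) + 1 : ℝ))))
      atTop (𝓝 0) := by
    simpa using (tendsto_exp_atBot.comp (tendsto_neg_atTop_atBot.comp
      ((tendsto_sum_range_one_div_add_nat_succ_atTop N).const_mul_atTop hc))).const_mul (w N)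
  rw [← tendsto_add_atTop_iff_nat N]
  refine squeeze_zero (fun n => (hN (n + N) (Nat.le_add_left N n)).1) (fun n => ?_) hlim
  rw [add_comm]
  exact bound n

theorem tendsto_zero_of_le_one_sub_div_mul_add {c : ℝ} (hc : 0 < c) {u e : ℕ → ℝ}
    (he : Tendsto e atTop (𝓝 0)) (hu0 : ∀ᶠ t in atTop, 0 ≤ u t)
    (hu : ∀ᶠ t : ℕ in atTop, u (t + 1) ≤ (1 - c / (t + 1)) * u t + e t / (t + 1)) :
    Tendsto u atTop (𝓝 0) := by
  refine tendsto_order.2 ⟨fun a ha => hu0.mono fun t ht => ha.trans_le ht, fun a ha => ?_⟩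
  set δ := a * c / 2 with hδ
  have hδc : δ / c = a / 2 := by rw [hδ]; field_simp
  -- `max (u t - δ / c) 0` is damped as soon as `e t ≤ δ`, since `δ / c` is the fixed point of
  -- `x ↦ (1 - c/(t+1)) x + δ/(t+1)`.
  have hw : Tendsto (fun t => max (u t - δ / c) 0) atTop (𝓝 0) := by
    refine tendsto_zero_of_le_one_sub_div_mul hc (Eventually.of_forall fun _ => le_max_right _ _) ?_
    filter_upwards [hu, he.eventually (eventually_le_nhds (by positivity : (0 : ℝ) < δ)),
      eventually_one_sub_div_nat_succ_nonneg c] with t hut het hdamp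
    have hfix : (1 - c / (t + 1)) * (δ / c) = δ / c - δ / (t + 1) := by field_simp
    have het' : e t / (t + 1) ≤ δ / (t + 1) := by gcongr
    refine max_le ?_ (mul_nonneg hdamp (le_max_right _ _))
    calc u (t + 1) - δ / c ≤ (1 - c / (t + 1)) * (u t - δ / c) := by nlinarith
      _ ≤ (1 - c / (t + 1)) * max (u t - δ / c) 0 := by gcongr; exact le_max_left _ _
  filter_upwards [hw.eventually (eventually_lt_nhds (half_pos ha))] with t ht
  linarith [le_max_left (u t - δ / c) 0]

theorem tendsto_zero_of_eq_one_sub_div_mul_add {c : ℝ} (hc : 0 < c) {v b : ℕ → ℝ}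
    (hb : Tendsto b atTop (𝓝 0))
    (hv : ∀ᶠ t : ℕ in atTop, v (t + 1) = (1 - c / (t + 1)) * v t + b t / (t + 1)) :
    Tendsto v atTop (𝓝 0) := by
  rw [tendsto_zero_iff_abs_tendsto_zero]
  refine tendsto_zero_of_le_one_sub_div_mul_add hc ((tendsto_zero_iff_abs_tendsto_zero b).1 hb)
    (Eventually.of_forall fun t => abs_nonneg (v t)) ?_
  filter_upwards [hv, eventually_one_sub_div_nat_succ_nonneg c] with t hvt hdamp
  calc |v (t + 1)| ≤ |(1 - c / (t + 1)) * v t| + |b t / (t + 1)| := hvt ▸ abs_add_le _ _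
    _ = (1 - c / (t + 1)) * |v t| + |b t| / (t + 1) := by
      rw [abs_mul, abs_div, abs_of_nonneg hdamp, abs_of_pos (by positivity : (0 : ℝ) < t + 1)]

theorem tendsto_div_of_eq_one_add_div_mul_add {a F : ℝ} (ha : a < 1) {y f : ℕ → ℝ}
    (hf : Tendsto f atTop (𝓝 F))
    (hy : ∀ᶠ t : ℕ in atTop, y (t + 1) = (1 + a / t) * y t + f t) :
    Tendsto (fun t : ℕ => y t / t) atTop (𝓝 (F / (1 - a))) := by
  set L := F / (1 - a) with hL
  have hFL : F = (1 - a) * L := by rw [hL]; field_simp [(sub_pos.2 ha).ne']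
  have hv : Tendsto (fun t : ℕ => y t / t - L) atTop (𝓝 0) := by
    refine tendsto_zero_of_eq_one_sub_div_mul_add (sub_pos.2 ha) (b := fun t => f t - F)
      (by simpa using hf.sub_const F) ?_
    filter_upwards [hy, eventually_ge_atTop 1] with t hyt ht
    have ht' : (t : ℝ) ≠ 0 := by positivity
    rw [hyt, hFL]
    push_cast
    field_simp
    ring
  simpa using hv.add_const L

theorem tendsto_Gamma_nat_add_one_sub_div_Gamma {a : ℝ} (ha : 0 < a) :
    Tendsto (fun t : ℕ => Gamma (t + 1 - a) / Gamma (t + 1)) atTop (𝓝 0) := by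
  have hlarge := tendsto_natCast_atTop_atTop.eventually_ge_atTop a
  refine tendsto_zero_of_le_one_sub_div_mul ha ?_ ?_
  · filter_upwards [hlarge] with t ht
    exact div_nonneg (Gamma_pos_of_pos (by linarith)).le (Gamma_pos_of_pos (by positivity)).le
  · filter_upwards [hlarge] with t ht
    have hΓ : Gamma (t + 1) ≠ 0 := (Gamma_pos_of_pos (by positivity)).ne'
    push_cast
    rw [add_right_comm _ 1 1, add_sub_right_comm _ 1 a, Gamma_add_one (by linarith),
      Gamma_add_one (by positivity)]
    apply le_of_eq
    field_simp

theorem erws_diffusivity_subcritical_general (ε r γ : ℝ) (hε : ε ∈ Set.Ioo (0:ℝ) 1)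
    (hr : r ∈ Set.Ioo (0:ℝ) 1)
    (hγ : γ ∈ Set.Ioo (0:ℝ) (1 / 2))
    (C : ℝ)
    (y : ℕ → ℝ)
    (hrec : ∀ t : ℕ, 1 ≤ t → y (t + 1) = (1 + 2 * γ / t) * y t
      + C * Real.Gamma ((t : ℝ) + 1 - ε - r) / Real.Gamma ((t : ℝ) + 1) + ε / (ε + r)) :
    Tendsto (fun t : ℕ => y t / t) atTop (nhds (ε / ((1 - 2 * γ) * (ε + r)))) := by
  have hforcing : Tendsto (fun t : ℕ =>
      C * Gamma ((t : ℝ) + 1 - ε - r) / Gamma ((t : ℝ) + 1) + ε / (ε + r)) atTop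
      (𝓝 (ε / (ε + r))) := by
    simpa [mul_div_assoc, sub_sub] using
      ((tendsto_Gamma_nat_add_one_sub_div_Gamma (add_pos hε.1 hr.1)).const_mul C).add_const
        (ε / (ε + r))
  have hlim := tendsto_div_of_eq_one_add_div_mul_add (a := 2 * γ) (y := y) (by linarith [hγ.2]) hforcing
    (eventually_atTop.2 ⟨1, fun t ht => by rw [hrec t ht, add_assoc]⟩)
  rwa [div_div, mul_comm] at hlim

theorem erws_diffusivity_subcritical (ε r γ : ℝ) (hε : ε ∈ Set.Ioo (0:ℝ) 1)
    (hr : r ∈ Set.Ioo (0:ℝ) 1) (hsum : ε + r < 1)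
    (hγ : γ ∈ Set.Ioo (0:ℝ) (1 / 2)) (hγres : 2 * γ ≠ 1 - ε - r)
    (C : ℝ) (hC : C = r / ((ε + r) * Real.Gamma (1 - ε - r)))
    (y : ℕ → ℝ) (hy1 : y 1 = 1)
    (hrec : ∀ t : ℕ, 1 ≤ t → y (t + 1) = (1 + 2 * γ / t) * y t
      + C * Real.Gamma ((t : ℝ) + 1 - ε - r) / Real.Gamma ((t : ℝ) + 1) + ε / (ε + r)) :
    Tendsto (fun t : ℕ => y t / t) atTop (nhds (ε / ((1 - 2 * γ) * (ε + r)))) :=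
  erws_diffusivity_subcritical_general ε r γ hε hr hγ C y hrec
end

section
/- Let ε, r ∈ (0,1) with ε + r < 1, let γ ∈ (1/2,1), and set C = r/((ε+r)·Γ(1−ε−r)) and D = −(1/Γ(2γ))·[ε/((ε+r)(1−2γ)) + r/((ε+r)(1−ε−r−2γ))]. If a real sequence (y_t)_{t≥1} satisfies y_1 = 1 and y_{t+1} = (1 + 2γ/t)·y_t + C·Γ(t+1−ε−r)/Γ(t+1) + ε/(ε+r) for all t ≥ 1, then lim_{t→∞} y_t / t^{2γ} = D. -/
/-!
The recurrence is linear of first order and can be solved in closed form: `Γ(t + 2γ) / Γ(t)`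
solves the homogeneous equation, while multiples of `Γ(t + 1 - ε - r) / Γ(t)` and of `t` are
particular solutions for the two forcing terms; the initial value `y₁ = 1` makes the coefficient
of the homogeneous solution equal to `D`. Log-convexity of `Γ` (Wendel's inequality) gives
`Γ(t + a) / Γ(t) ~ t ^ a`, so after division by `t ^ (2γ)` only the homogeneous term survives,
because `1 - ε - r < 2γ` and `1 < 2γ`.
-/

open Real Filter Topology

namespace Real

theorem Gamma_add_le_Gamma_mul_rpow {a x : ℝ} (ha₀ : 0 < a) (ha₁ : a < 1) (hx : 0 < x) :
    Gamma (x + a) ≤ Gamma x * x ^ a := by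
  have hΓ := Gamma_pos_of_pos hx
  have h := Gamma_mul_add_mul_le_rpow_Gamma_mul_rpow_Gamma hx (by linarith : 0 < x + 1)
    (sub_pos.2 ha₁) ha₀ (sub_add_cancel 1 a)
  rwa [show (1 - a) * x + a * (x + 1) = x + a by ring, Gamma_add_one hx.ne',
    mul_rpow hx.le hΓ.le, mul_left_comm, ← rpow_add hΓ, sub_add_cancel,
    rpow_one, mul_comm] at h

theorem tendsto_add_div_self_atTop (a : ℝ) : Tendsto (fun x : ℝ => (x + a) / x) atTop (𝓝 1) := by
  have h := tendsto_const_nhds (x := (1 : ℝ)) |>.add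
    ((tendsto_const_nhds (x := a)).div_atTop tendsto_id)
  rw [add_zero] at h
  refine h.congr' ?_
  filter_upwards [eventually_gt_atTop 0] with x hx
  simp only [id, add_div, div_self hx.ne']

theorem tendsto_Gamma_add_div_Gamma_mul_rpow_of_lt_one {a : ℝ} (ha₀ : 0 < a) (ha₁ : a < 1) :
    Tendsto (fun x : ℝ => Gamma (x + a) / (Gamma x * x ^ a)) atTop (𝓝 1) := by
  have hlow : Tendsto (fun x : ℝ => x / (x + a)) atTop (𝓝 1) := by
    simpa using (tendsto_add_div_self_atTop a).inv₀ one_ne_zero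
  refine tendsto_of_tendsto_of_tendsto_of_le_of_le' hlow tendsto_const_nhds ?_ ?_
  · filter_upwards [eventually_gt_atTop 0] with x hx
    have hxa : 0 < x + a := by linarith
    -- the upper bound at `x + a` with exponent `1 - a` is a lower bound at `x`
    have h := Gamma_add_le_Gamma_mul_rpow (sub_pos.2 ha₁) (by linarith) hxa
    rw [add_add_sub_cancel, Gamma_add_one hx.ne'] at h
    rw [div_le_div_iff₀ hxa (by have := Gamma_pos_of_pos hx; positivity)]
    calc x * (Gamma x * x ^ a) = x * Gamma x * x ^ a := by ring
      _ ≤ Gamma (x + a) * (x + a) ^ (1 - a) * (x + a) ^ a := by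
        have := Gamma_pos_of_pos hxa
        gcongr
        linarith
      _ = Gamma (x + a) * (x + a) := by
        rw [mul_assoc, ← rpow_add hxa, sub_add_cancel, rpow_one]
  · filter_upwards [eventually_gt_atTop 0] with x hx
    rw [div_le_one (by have := Gamma_pos_of_pos hx; positivity)]
    exact Gamma_add_le_Gamma_mul_rpow ha₀ ha₁ hx

theorem tendsto_Gamma_add_div_Gamma_mul_rpow_add_one {a : ℝ}
    (h : Tendsto (fun x : ℝ => Gamma (x + a) / (Gamma x * x ^ a)) atTop (𝓝 1)) :
    Tendsto (fun x : ℝ => Gamma (x + (a + 1)) / (Gamma x * x ^ (a + 1))) atTop (𝓝 1) := by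
  have h' := (tendsto_add_div_self_atTop a).mul h
  rw [one_mul] at h'
  refine h'.congr' ?_
  filter_upwards [eventually_gt_atTop 0, eventually_gt_atTop (-a)] with x hx hxa
  rw [← add_assoc, Gamma_add_one (by linarith), rpow_add_one hx.ne']
  field_simp

theorem tendsto_Gamma_add_div_Gamma_mul_rpow {a : ℝ} (ha : 0 ≤ a) :
    Tendsto (fun x : ℝ => Gamma (x + a) / (Gamma x * x ^ a)) atTop (𝓝 1) := by
  suffices key : ∀ n : ℕ, ∀ f : ℝ, 0 ≤ f → f < 1 →
      Tendsto (fun x : ℝ => Gamma (x + (f + n)) / (Gamma x * x ^ (f + n))) atTop (𝓝 1) by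
    simpa using key ⌊a⌋₊ (a - ⌊a⌋₊) (sub_nonneg.2 (Nat.floor_le ha))
      (by linarith [Nat.lt_floor_add_one a])
  intro n f hf₀ hf₁
  induction n with
  | zero =>
    rcases hf₀.eq_or_lt with rfl | hf₀
    · refine tendsto_const_nhds.congr' ?_
      filter_upwards [eventually_gt_atTop 0] with x hx
      simp [(Gamma_pos_of_pos hx).ne']
    · simpa using tendsto_Gamma_add_div_Gamma_mul_rpow_of_lt_one hf₀ hf₁
  | succ n ih =>
    simpa only [Nat.cast_succ, add_assoc] using tendsto_Gamma_add_div_Gamma_mul_rpow_add_one ih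

end Real

/-- The solution of `y (t + 1) = (1 + b / t) * y t + c * Γ(t + a) / Γ(t + 1) + e` whose
homogeneous part `Γ(t + b) / Γ(t)` has coefficient `A`. -/
noncomputable def gammaRecSolution (a b c e A t : ℝ) : ℝ :=
  A * (Gamma (t + b) / Gamma t) + c / (a - b) * (Gamma (t + a) / Gamma t) + e / (1 - b) * t

section gammaRecSolution

variable {a b c e A : ℝ}

theorem gammaRecSolution_add_one {t : ℝ} (ht : 0 < t) (ha : 0 ≤ a) (hb : 0 ≤ b)
    (hab : a ≠ b) (hb₁ : b ≠ 1) :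
    gammaRecSolution a b c e A (t + 1) =
      (1 + b / t) * gammaRecSolution a b c e A t + c * Gamma (t + a) / Gamma (t + 1) + e := by
  have hΓ := (Gamma_pos_of_pos ht).ne'
  have hab' : a - b ≠ 0 := sub_ne_zero.2 hab
  have hb₁' : 1 - b ≠ 0 := sub_ne_zero.2 hb₁.symm
  simp only [gammaRecSolution]
  rw [add_right_comm t 1 a, add_right_comm t 1 b, Gamma_add_one (by positivity : t + a ≠ 0),
    Gamma_add_one (by positivity : t + b ≠ 0), Gamma_add_one ht.ne']
  field_simp
  ring

theorem eq_gammaRecSolution (ha : 0 ≤ a) (hb : 0 ≤ b) (hab : a ≠ b) (hb₁ : b ≠ 1) {y : ℕ → ℝ}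
    (hrec : ∀ t : ℕ, 1 ≤ t →
      y (t + 1) = (1 + b / t) * y t + c * Gamma (t + a) / Gamma (t + 1) + e)
    (hA : gammaRecSolution a b c e A 1 = y 1) {t : ℕ} (ht : 1 ≤ t) :
    y t = gammaRecSolution a b c e A t := by
  induction t, ht using Nat.le_induction with
  | base => simpa using hA.symm
  | succ t ht ih =>
    rw [hrec t ht, ih, Nat.cast_succ,
      gammaRecSolution_add_one (by positivity) ha hb hab hb₁]

theorem tendsto_gammaRecSolution_div_rpow (ha : 0 ≤ a) (hab : a < b) (hb : 1 < b) :
    Tendsto (fun t : ℝ => gammaRecSolution a b c e A t / t ^ b) atTop (𝓝 A) := by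
  have hpow : ∀ {s : ℝ}, s < b → Tendsto (fun t : ℝ => t ^ (s - b)) atTop (𝓝 0) := fun hs => by
    simpa using tendsto_rpow_neg_atTop (sub_pos.2 hs)
  have hlim := ((tendsto_Gamma_add_div_Gamma_mul_rpow (by linarith)).const_mul A).add
    ((((tendsto_Gamma_add_div_Gamma_mul_rpow ha).mul (hpow hab)).const_mul (c / (a - b))).add
      ((hpow hb).const_mul (e / (1 - b))))
  simp only [mul_zero, mul_one, add_zero] at hlim
  refine hlim.congr' ?_
  filter_upwards [eventually_gt_atTop 0] with t ht
  have hΓ := (Gamma_pos_of_pos ht).ne'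
  simp only [gammaRecSolution, rpow_sub ht, rpow_one]
  field_simp
  ring

end gammaRecSolution

theorem erws_superdiffusive_coefficient (ε r γ : ℝ) (hε : ε ∈ Set.Ioo (0:ℝ) 1)
    (hr : r ∈ Set.Ioo (0:ℝ) 1) (hsum : ε + r < 1)
    (hγ : γ ∈ Set.Ioo (1/2 : ℝ) 1)
    (C D : ℝ) (hC : C = r / ((ε + r) * Real.Gamma (1 - ε - r)))
    (hD : D = -(1 / Real.Gamma (2 * γ)) *
      (ε / ((ε + r) * (1 - 2 * γ)) + r / ((ε + r) * (1 - ε - r - 2 * γ))))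
    (y : ℕ → ℝ) (hy1 : y 1 = 1)
    (hrec : ∀ t : ℕ, 1 ≤ t → y (t + 1) = (1 + 2 * γ / t) * y t
      + C * Real.Gamma ((t : ℝ) + 1 - ε - r) / Real.Gamma ((t : ℝ) + 1) + ε / (ε + r)) :
    Tendsto (fun t : ℕ => y t / (t : ℝ) ^ (2 * γ)) atTop (nhds D) := by
  have ha : 0 < 1 - ε - r := by linarith
  have hab : 1 - ε - r < 2 * γ := by linarith [hε.1, hr.1, hγ.1]
  have hb : 1 < 2 * γ := by linarith [hγ.1]
  have hrec' : ∀ t : ℕ, 1 ≤ t → y (t + 1) = (1 + 2 * γ / t) * y t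
      + C * Gamma (t + (1 - ε - r)) / Gamma (t + 1) + ε / (ε + r) := by
    intro t ht
    rw [hrec t ht, add_sub_assoc', add_sub_assoc']
  have hD₁ : gammaRecSolution (1 - ε - r) (2 * γ) C (ε / (ε + r)) D 1 = y 1 := by
    have hεr : ε + r ≠ 0 := by linarith [hε.1, hr.1]
    have hb₁ : 1 - 2 * γ ≠ 0 := by linarith
    have hab' : 1 - ε - r - 2 * γ ≠ 0 := by linarith
    have hΓa := (Gamma_pos_of_pos ha).ne'
    have hΓb := (Gamma_pos_of_pos (by linarith : 0 < 2 * γ)).ne'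
    rw [hy1, gammaRecSolution, add_comm 1, add_comm 1, Gamma_add_one ha.ne',
      Gamma_add_one (by linarith : 2 * γ ≠ 0), Gamma_one, hC, hD]
    field_simp
    ring
  have hsol : ∀ t : ℕ, 1 ≤ t → y t = gammaRecSolution (1 - ε - r) (2 * γ) C (ε / (ε + r)) D t :=
    fun t ht => eq_gammaRecSolution ha.le (by linarith) hab.ne hb.ne' hrec' hD₁ ht
  refine ((tendsto_gammaRecSolution_div_rpow (c := C) (e := ε / (ε + r)) ha.le hab hb).comp
    tendsto_natCast_atTop_atTop).congr' ?_
  filter_upwards [eventually_ge_atTop 1] with t ht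
  rw [Function.comp_apply, hsol t ht]
end

section
/- Let ε ∈ (0,1) and r ∈ (0,1/2) with ε + r < 1, set γ = (1−ε)/2 and C = r/((ε+r)·Γ(1−ε−r)). If a real sequence (y_t)_{t≥1} satisfies y_1 = 1 and y_{t+1} = (1 + 2γ/t)·y_t + C·Γ(t+1−ε−r)/Γ(t+1) + ε/(ε+r) for all t ≥ 1, then for every t ≥ 1, y_t = t/(ε+r) − Γ(t+1−ε−r)/((ε+r)·Γ(1−ε−r)·Γ(t)); in particular the coefficient D = −(1/Γ(2γ))·[ε/((ε+r)(1−2γ)) + r/((ε+r)(1−ε−r−2γ))] vanishes for this choice of γ. -/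
/-!
The closed form is checked by induction on `t`. With `a = 1 - ε - r`, the functional equation
`Γ(s + 1) = s Γ(s)` gives `Γ(t + 1 + a) / Γ(t + 1) = (1 + a / t) · Γ(t + a) / Γ(t)`, and since
`2γ = 1 - ε` the memory term, the Gamma forcing term and the drift `ε / (ε + r)` combine exactly into
this ratio. For the coefficient `D`, the choice `2γ = 1 - ε` turns its two summands into
`1 / (ε + r)` and `-1 / (ε + r)`.
-/

open Real

noncomputable def erwsSecondMoment (ε r t : ℝ) : ℝ :=
  t / (ε + r) - Gamma (t + 1 - ε - r) / ((ε + r) * Gamma (1 - ε - r) * Gamma t)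

lemma erwsSecondMoment_one {ε r : ℝ} (hs : ε + r ≠ 0) (ha : 0 < 1 - ε - r) :
    erwsSecondMoment ε r 1 = 1 := by
  have hGa : Gamma (1 - ε - r) ≠ 0 := (Gamma_pos_of_pos ha).ne'
  have hGamma : Gamma (1 + 1 - ε - r) = (1 - ε - r) * Gamma (1 - ε - r) := by
    rw [← Gamma_add_one ha.ne']
    ring_nf
  rw [erwsSecondMoment, hGamma, Gamma_one]
  field_simp
  ring

lemma erwsSecondMoment_add_one {ε r γ t : ℝ} (hγ : 2 * γ = 1 - ε) (ht : t ≠ 0)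
    (hta : t + 1 - ε - r ≠ 0) :
    erwsSecondMoment ε r (t + 1) = (1 + 2 * γ / t) * erwsSecondMoment ε r t
      + r / ((ε + r) * Gamma (1 - ε - r)) * Gamma (t + 1 - ε - r) / Gamma (t + 1)
      + ε / (ε + r) := by
  have hGamma : Gamma (t + 1 + 1 - ε - r) = (t + 1 - ε - r) * Gamma (t + 1 - ε - r) := by
    rw [← Gamma_add_one hta]
    ring_nf
  rw [erwsSecondMoment, erwsSecondMoment, hGamma, Gamma_add_one ht, hγ]
  field_simp
  ring

lemma erws_diffusivity_coeff_eq_zero {ε r γ : ℝ} (hγ : 2 * γ = 1 - ε) (hε : ε ≠ 0) (hr : r ≠ 0) :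
    ε / ((ε + r) * (1 - 2 * γ)) + r / ((ε + r) * (1 - ε - r - 2 * γ)) = 0 := by
  rw [hγ, show 1 - (1 - ε) = ε by ring, show 1 - ε - r - (1 - ε) = -r by ring]
  field_simp
  ring

theorem erws_regular_diffusivity_formula (ε r : ℝ) (hε : ε ∈ Set.Ioo (0:ℝ) 1)
    (hr : r ∈ Set.Ioo (0:ℝ) (1/2)) (hsum : ε + r < 1)
    (γ : ℝ) (hγ : γ = (1 - ε) / 2)
    (C : ℝ) (hC : C = r / ((ε + r) * Real.Gamma (1 - ε - r)))
    (y : ℕ → ℝ) (hy1 : y 1 = 1)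
    (hrec : ∀ t : ℕ, 1 ≤ t → y (t + 1) = (1 + 2 * γ / t) * y t
      + C * Real.Gamma ((t : ℝ) + 1 - ε - r) / Real.Gamma ((t : ℝ) + 1) + ε / (ε + r)) :
    (∀ t : ℕ, 1 ≤ t →
      y t = (t : ℝ) / (ε + r)
        - Real.Gamma ((t : ℝ) + 1 - ε - r) / ((ε + r) * Real.Gamma (1 - ε - r) * Real.Gamma (t : ℝ)))
    ∧ -(1 / Real.Gamma (2 * γ)) *
        (ε / ((ε + r) * (1 - 2 * γ)) + r / ((ε + r) * (1 - ε - r - 2 * γ))) = 0 := by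
  have h2γ : 2 * γ = 1 - ε := by rw [hγ]; ring
  have hs : ε + r ≠ 0 := by linarith [hε.1, hr.1]
  have ha : 0 < 1 - ε - r := by linarith
  refine ⟨fun t ht => ?_, by rw [erws_diffusivity_coeff_eq_zero h2γ hε.1.ne' hr.1.ne', mul_zero]⟩
  change y t = erwsSecondMoment ε r t
  induction t, ht using Nat.le_induction with
  | base => rw [hy1, Nat.cast_one, erwsSecondMoment_one hs ha]
  | succ t ht ih =>
    have htpos : (0 : ℝ) < t := by exact_mod_cast ht
    rw [hrec t ht, ih, hC, Nat.cast_succ,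
      erwsSecondMoment_add_one h2γ htpos.ne' (by linarith)]
end

section
/- Let ε ∈ (0,1) and r ∈ (0,1/2) with ε + r < 1, set γ = (1−εr)/2 and C = r/((ε+r)·Γ(1−ε−r)). If a real sequence (y_t)_{t≥1} satisfies y_1 = 1 and y_{t+1} = (1 + 2γ/t)·y_t + C·Γ(t+1−ε−r)/Γ(t+1) + ε/(ε+r) for all t ≥ 1, then lim_{t→∞} y_t / t = 1/(r(ε+r)). -/
/-!
Subtracting the particular solution `d t / (1 - b) + c Γ(t + a) / ((a - b) Γ(t))` turns the
recurrence `y (t + 1) = (1 + b / t) y t + c Γ(t + a) / Γ(t + 1) + d` into the homogeneous one,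
whose solutions are the multiples of `Γ(t + b) / Γ(t)`. Log-convexity of `Γ` gives
`Γ(t + a) ≤ t ^ a Γ(t)`, so for `a, b ∈ (0, 1)` both Gamma quotients are `o(t)` and
`y t / t → d / (1 - b)`. For the elephant walk `b = 2γ = 1 - εr` and `d = ε / (ε + r)`.
-/

open Real Filter Topology

namespace Real

theorem Gamma_add_le_rpow_mul_Gamma {x a : ℝ} (hx : 0 < x) (ha0 : 0 < a) (ha1 : a < 1) :
    Gamma (x + a) ≤ x ^ a * Gamma x := by
  have hconv := Gamma_mul_add_mul_le_rpow_Gamma_mul_rpow_Gamma (s := x) (t := x + 1)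
    hx (by linarith) (sub_pos.2 ha1) ha0 (by ring)
  have hΓ := Gamma_pos_of_pos hx
  calc Gamma (x + a) = Gamma ((1 - a) * x + a * (x + 1)) := by ring_nf
    _ ≤ Gamma x ^ (1 - a) * (x * Gamma x) ^ a := by rwa [Gamma_add_one hx.ne'] at hconv
    _ = x ^ a * Gamma x := by
      rw [mul_rpow hx.le hΓ.le, mul_left_comm, ← rpow_add hΓ, sub_add_cancel, rpow_one]

theorem tendsto_Gamma_natCast_add_div_Gamma_natCast_add_one {a : ℝ} (ha0 : 0 < a)
    (ha1 : a < 1) :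
    Tendsto (fun n : ℕ => Gamma (n + a) / Gamma (n + 1)) atTop (𝓝 0) := by
  have hpow : Tendsto (fun n : ℕ => (n : ℝ) ^ (a - 1)) atTop (𝓝 0) := by
    simpa only [neg_sub, Function.comp_def] using
      (tendsto_rpow_neg_atTop (sub_pos.2 ha1)).comp tendsto_natCast_atTop_atTop
  refine squeeze_zero' (.of_forall fun n => ?_) ?_ hpow
  · exact div_nonneg (Gamma_pos_of_pos (by positivity)).le (Gamma_pos_of_pos (by positivity)).le
  filter_upwards [eventually_ge_atTop 1] with n hn
  have hn : (0 : ℝ) < n := by exact_mod_cast hn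
  have hΓ := Gamma_pos_of_pos hn
  rw [Gamma_add_one hn.ne', div_le_iff₀ (by positivity)]
  calc Gamma (n + a) ≤ (n : ℝ) ^ a * Gamma n := Gamma_add_le_rpow_mul_Gamma hn ha0 ha1
    _ = (n : ℝ) ^ (a - 1) * (n * Gamma n) := by
      rw [← mul_assoc, ← rpow_add_one hn.ne', sub_add_cancel]

end Real

def SolvesGammaRecurrence (a b c d : ℝ) (y : ℕ → ℝ) : Prop :=
  ∀ t : ℕ, 1 ≤ t →
    y (t + 1) = (1 + b / t) * y t + c * Gamma ((t : ℝ) + a) / Gamma ((t : ℝ) + 1) + d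

namespace SolvesGammaRecurrence

variable {a b c d : ℝ} {y p : ℕ → ℝ}

theorem sub (hy : SolvesGammaRecurrence a b c d y) (hp : SolvesGammaRecurrence a b c d p) :
    SolvesGammaRecurrence a b 0 0 (y - p) := by
  intro t ht
  simp only [Pi.sub_apply, hy t ht, hp t ht]
  ring

theorem exists_eq_mul_Gamma_div_Gamma (hy : SolvesGammaRecurrence a b 0 0 y) (hb : -1 < b) :
    ∃ K, ∀ t : ℕ, 1 ≤ t → y t = K * (Gamma (t + b) / Gamma t) := by
  refine ⟨y 1 / Gamma (1 + b), fun t ht => ?_⟩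
  induction t, ht using Nat.le_induction with
  | base =>
    have : Gamma (1 + b) ≠ 0 := (Gamma_pos_of_pos (by linarith)).ne'
    rw [Nat.cast_one, Gamma_one, div_one, div_mul_cancel₀ _ this]
  | succ t ht ih =>
    have ht' : (1 : ℝ) ≤ t := by exact_mod_cast ht
    rw [hy t ht, zero_mul, zero_div, add_zero, add_zero, ih]
    push_cast
    rw [add_right_comm, Gamma_add_one (by linarith), Gamma_add_one (by positivity)]
    have := (Gamma_pos_of_pos (by positivity : (0 : ℝ) < t)).ne'
    field_simp

theorem particular (ha : -1 < a) (hab : a ≠ b) (hb : b ≠ 1) :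
    SolvesGammaRecurrence a b c d
      (fun t => d / (1 - b) * t + c / (a - b) * (Gamma (t + a) / Gamma t)) := by
  intro t ht
  have ht' : (1 : ℝ) ≤ t := by exact_mod_cast ht
  push_cast
  rw [add_right_comm, Gamma_add_one (by linarith), Gamma_add_one (by positivity)]
  have := (Gamma_pos_of_pos (by positivity : (0 : ℝ) < t)).ne'
  have := sub_ne_zero.2 hab
  have := sub_ne_zero.2 hb.symm
  field_simp
  ring

theorem tendsto_div_natCast (hy : SolvesGammaRecurrence a b c d y) (ha0 : 0 < a) (ha1 : a < 1)
    (hb0 : 0 < b) (hb1 : b < 1) (hab : a ≠ b) :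
    Tendsto (fun t : ℕ => y t / t) atTop (𝓝 (d / (1 - b))) := by
  obtain ⟨K, hK⟩ := (hy.sub (particular (by linarith) hab hb1.ne)).exists_eq_mul_Gamma_div_Gamma
    (by linarith)
  have hlim := ((tendsto_Gamma_natCast_add_div_Gamma_natCast_add_one ha0 ha1).const_mul
    (c / (a - b))).const_add (d / (1 - b)) |>.add
    ((tendsto_Gamma_natCast_add_div_Gamma_natCast_add_one hb0 hb1).const_mul K)
  rw [mul_zero, mul_zero, add_zero, add_zero] at hlim
  refine hlim.congr' ?_
  filter_upwards [eventually_ge_atTop 1] with t ht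
  have htpos : (0 : ℝ) < t := by exact_mod_cast ht
  have hyt : y t = d / (1 - b) * t + c / (a - b) * (Gamma (t + a) / Gamma t)
      + K * (Gamma (t + b) / Gamma t) := by
    rw [← sub_eq_iff_eq_add', ← hK t ht, Pi.sub_apply]
  have := (Gamma_pos_of_pos htpos).ne'
  rw [hyt, Gamma_add_one htpos.ne']
  field_simp

end SolvesGammaRecurrence

theorem erws_residual_diffusivity_general (ε r : ℝ) (hε : ε ∈ Set.Ioo (0:ℝ) 1)
    (hr : r ∈ Set.Ioo (0:ℝ) (1/2)) (hsum : ε + r < 1)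
    (γ : ℝ) (hγ : γ = (1 - ε * r) / 2)
    (C : ℝ)
    (y : ℕ → ℝ)
    (hrec : ∀ t : ℕ, 1 ≤ t → y (t + 1) = (1 + 2 * γ / t) * y t
      + C * Real.Gamma ((t : ℝ) + 1 - ε - r) / Real.Gamma ((t : ℝ) + 1) + ε / (ε + r)) :
    Tendsto (fun t : ℕ => y t / t) atTop (nhds (1 / (r * (ε + r)))) := by
  obtain ⟨hε0, hε1⟩ := hε
  obtain ⟨hr0, hr1⟩ := hr
  have hεr : 0 < ε * r := mul_pos hε0 hr0
  have hy : SolvesGammaRecurrence (1 - ε - r) (1 - ε * r) C (ε / (ε + r)) y := by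
    intro t ht
    rw [hrec t ht, hγ]
    ring_nf
  have hlim := hy.tendsto_div_natCast (by linarith) (by linarith) (by nlinarith) (by linarith)
    (by nlinarith)
  convert hlim using 2
  field_simp
  ring

theorem erws_residual_diffusivity (ε r : ℝ) (hε : ε ∈ Set.Ioo (0:ℝ) 1)
    (hr : r ∈ Set.Ioo (0:ℝ) (1/2)) (hsum : ε + r < 1)
    (γ : ℝ) (hγ : γ = (1 - ε * r) / 2)
    (C : ℝ) (hC : C = r / ((ε + r) * Real.Gamma (1 - ε - r)))
    (y : ℕ → ℝ) (hy1 : y 1 = 1)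
    (hrec : ∀ t : ℕ, 1 ≤ t → y (t + 1) = (1 + 2 * γ / t) * y t
      + C * Real.Gamma ((t : ℝ) + 1 - ε - r) / Real.Gamma ((t : ℝ) + 1) + ε / (ε + r)) :
    Tendsto (fun t : ℕ => y t / t) atTop (nhds (1 / (r * (ε + r)))) :=
  erws_residual_diffusivity_general ε r hε hr hsum γ hγ C y hrec
end

section
/- Let (Ω, 𝓕, ℙ) be a probability space with a filtration (𝓕_t)_{t≥1}, let γ, γ' be real numbers, let A be the rotation of ℝ² by π/2 (A(x,y) = (−y,x)), and let (σ_k)_{k≥1} be an adapted process with values in {i, j, −i, −j, 0} ⊂ ℝ²; set X_t = ∑_{k=1}^t σ_k. Suppose that for every t ≥ 1, almost surely 𝔼[σ_{t+1} | 𝓕_t] = (1/t)·(γ·X_t + γ'·A X_t). Then for every t ≥ 1, 𝔼[|X_{t+1}|²] = (1 + 2γ/t)·𝔼[|X_t|²] + 𝔼[|σ_{t+1}|²]; in particular the parameter γ' does not enter, since X_t · (A X_t) = 0. -/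
open MeasureTheory Filter Set

/-- Euclidean dot product on `ℝ × ℝ`. -/
def dot2 (a b : ℝ × ℝ) : ℝ := a.1 * b.1 + a.2 * b.2

/-- Rotation of `ℝ²` by `π/2`: `A (x, y) = (-y, x)`. -/
def rotA (v : ℝ × ℝ) : ℝ × ℝ := (-v.2, v.1)

/-- Squared Euclidean norm on `ℝ × ℝ`. -/
def nsq2 (v : ℝ × ℝ) : ℝ := v.1 ^ 2 + v.2 ^ 2

/-!
Since `X_{t+1} = X_t + σ_{t+1}`, expanding the square gives
`𝔼|X_{t+1}|² = 𝔼|X_t|² + 2 𝔼[X_t · σ_{t+1}] + 𝔼|σ_{t+1}|²`.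
As `X_t` is `𝓕_t`-measurable, the cross term equals
`𝔼[X_t · 𝔼[σ_{t+1} | 𝓕_t]] = (1/t) 𝔼[X_t · (γ X_t + γ' A X_t)] = (γ/t) 𝔼|X_t|²`,
because `X_t ⟂ A X_t`. All integrability is free: the steps are bounded, hence so is `X_t`.
-/

section CondExp

variable {Ω E F G : Type*} {m m₀ : MeasurableSpace Ω} {μ : Measure Ω}
  [NormedAddCommGroup E] [NormedSpace ℝ E] [NormedAddCommGroup F] [NormedSpace ℝ F]
  [NormedAddCommGroup G] [NormedSpace ℝ G]

theorem integral_bilin_condExp_of_stronglyMeasurable_left [CompleteSpace F] [CompleteSpace G]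
    (B : E →L[ℝ] F →L[ℝ] G) (hm : m ≤ m₀) [SigmaFinite (μ.trim hm)] {f : Ω → E} {g : Ω → F}
    (hf : StronglyMeasurable[m] f) (hfg : Integrable (fun ω ↦ B (f ω) (g ω)) μ)
    (hg : Integrable g μ) :
    ∫ ω, B (f ω) (μ[g | m] ω) ∂μ = ∫ ω, B (f ω) (g ω) ∂μ := by
  rw [← integral_condExp hm (f := fun ω ↦ B (f ω) (g ω))]
  exact integral_congr_ae (condExp_bilin_of_stronglyMeasurable_left B hf hfg hg).symm

theorem integrable_bilin_of_bound [IsFiniteMeasure μ] (B : E →L[ℝ] F →L[ℝ] G)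
    {f : Ω → E} {g : Ω → F} (hf : AEStronglyMeasurable f μ) (hg : AEStronglyMeasurable g μ)
    {C D : ℝ} (hfC : ∀ ω, ‖f ω‖ ≤ C) (hgD : ∀ ω, ‖g ω‖ ≤ D) :
    Integrable (fun ω ↦ B (f ω) (g ω)) μ := by
  refine .of_bound (B.continuous₂.comp_aestronglyMeasurable₂ hf hg) (‖B‖ * C * D)
    (.of_forall fun ω ↦ (B.le_opNorm₂ _ _).trans ?_)
  have hC : 0 ≤ C := (norm_nonneg _).trans (hfC ω)
  gcongr
  exacts [hfC ω, hgD ω]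

end CondExp

noncomputable def dot2CLM : (ℝ × ℝ) →L[ℝ] (ℝ × ℝ) →L[ℝ] ℝ :=
  (ContinuousLinearMap.mul ℝ ℝ).bilinearComp (.fst ℝ ℝ ℝ) (.fst ℝ ℝ ℝ) +
    (ContinuousLinearMap.mul ℝ ℝ).bilinearComp (.snd ℝ ℝ ℝ) (.snd ℝ ℝ ℝ)

@[simp]
theorem dot2CLM_apply (a b : ℝ × ℝ) : dot2CLM a b = dot2 a b := rfl

theorem nsq2_eq_dot2 (v : ℝ × ℝ) : nsq2 v = dot2 v v := by
  simp only [nsq2, dot2]; ring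

theorem nsq2_add (a b : ℝ × ℝ) : nsq2 (a + b) = nsq2 a + 2 * dot2 a b + nsq2 b := by
  simp only [nsq2, dot2, Prod.fst_add, Prod.snd_add]; ring

theorem dot2_rotA_self (v : ℝ × ℝ) : dot2 v (rotA v) = 0 := by
  simp only [dot2, rotA]; ring

theorem dot2_smul_add_smul_rotA (v : ℝ × ℝ) (a b : ℝ) :
    dot2 v (a • v + b • rotA v) = a * nsq2 v := by
  simp only [dot2, rotA, nsq2, Prod.smul_fst, Prod.smul_snd, Prod.fst_add, Prod.snd_add,
    smul_eq_mul]
  ring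

theorem integral_nsq2_add_condExp {Ω : Type*} {m m₀ : MeasurableSpace Ω} {μ : Measure Ω}
    [IsFiniteMeasure μ] (hm : m ≤ m₀) {Y Z : Ω → ℝ × ℝ} (hY : StronglyMeasurable[m] Y)
    (hZ : StronglyMeasurable Z) {C D : ℝ} (hYC : ∀ ω, ‖Y ω‖ ≤ C) (hZD : ∀ ω, ‖Z ω‖ ≤ D) :
    ∫ ω, nsq2 (Y ω + Z ω) ∂μ = ∫ ω, nsq2 (Y ω) ∂μ + 2 * ∫ ω, dot2 (Y ω) (μ[Z | m] ω) ∂μ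
      + ∫ ω, nsq2 (Z ω) ∂μ := by
  have hY' : AEStronglyMeasurable Y μ := (hY.mono hm).aestronglyMeasurable
  have hZ' : AEStronglyMeasurable Z μ := hZ.aestronglyMeasurable
  have hYY := integrable_bilin_of_bound (μ := μ) dot2CLM hY' hY' hYC hYC
  have hYZ := integrable_bilin_of_bound (μ := μ) dot2CLM hY' hZ' hYC hZD
  have hZZ := integrable_bilin_of_bound (μ := μ) dot2CLM hZ' hZ' hZD hZD
  simp only [dot2CLM_apply, ← nsq2_eq_dot2] at hYY hYZ hZZ
  have hZi : Integrable Z μ := .of_bound hZ' D (.of_forall hZD)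
  have hcross : ∫ ω, dot2 (Y ω) (μ[Z | m] ω) ∂μ = ∫ ω, dot2 (Y ω) (Z ω) ∂μ :=
    integral_bilin_condExp_of_stronglyMeasurable_left dot2CLM hm hY hYZ hZi
  simp only [nsq2_add]
  rw [integral_add (f := fun ω ↦ nsq2 (Y ω) + 2 * dot2 (Y ω) (Z ω))
      (hYY.add (hYZ.const_mul 2)) hZZ,
    integral_add hYY (hYZ.const_mul 2), integral_const_mul, hcross]

theorem norm_le_one_of_mem_steps {v : ℝ × ℝ}
    (hv : v ∈ ({(1, 0), (0, 1), (-1, 0), (0, -1), (0, 0)} : Set (ℝ × ℝ))) : ‖v‖ ≤ 1 := by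
  simp only [mem_insert_iff, mem_singleton_iff] at hv
  rcases hv with rfl | rfl | rfl | rfl | rfl <;> simp [Prod.norm_def]

theorem norm_sum_Icc_le {E : Type*} [SeminormedAddCommGroup E] {x : ℕ → E}
    (hx : ∀ k, 1 ≤ k → ‖x k‖ ≤ 1) (t : ℕ) : ‖∑ k ∈ Finset.Icc 1 t, x k‖ ≤ t := by
  calc ‖∑ k ∈ Finset.Icc 1 t, x k‖ ≤ ∑ k ∈ Finset.Icc 1 t, ‖x k‖ := norm_sum_le _ _
    _ ≤ ∑ k ∈ Finset.Icc 1 t, 1 := Finset.sum_le_sum fun k hk ↦ hx k (Finset.mem_Icc.mp hk).1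
    _ = t := by simp

theorem erws2d_second_moment_recurrence {Ω : Type*} [m : MeasurableSpace Ω]
    (μ : Measure Ω) [IsProbabilityMeasure μ]
    (ℱ : Filtration ℕ m) (γ γ' : ℝ)
    (σ : ℕ → Ω → ℝ × ℝ) (hadapted : Adapted ℱ σ)
    (hσval : ∀ k : ℕ, 1 ≤ k → ∀ ω,
      σ k ω ∈ ({(1, 0), (0, 1), (-1, 0), (0, -1), (0, 0)} : Set (ℝ × ℝ)))
    (X : ℕ → Ω → ℝ × ℝ) (hX : ∀ t ω, X t ω = ∑ k ∈ Finset.Icc 1 t, σ k ω)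
    (hcond : ∀ t : ℕ, 1 ≤ t → ∀ᵐ ω ∂μ,
      (μ[σ (t + 1) | ℱ t]) ω = (1 / (t : ℝ)) • (γ • X t ω + γ' • rotA (X t ω))) :
    (∀ t : ℕ, 1 ≤ t →
      ∫ ω, nsq2 (X (t + 1) ω) ∂μ
        = (1 + 2 * γ / t) * ∫ ω, nsq2 (X t ω) ∂μ + ∫ ω, nsq2 (σ (t + 1) ω) ∂μ)
    ∧ (∀ v : ℝ × ℝ, dot2 v (rotA v) = 0) := by
  refine ⟨fun t ht ↦ ?_, dot2_rotA_self⟩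
  have hσ_le : ∀ k, 1 ≤ k → ∀ ω, ‖σ k ω‖ ≤ 1 := fun k hk ω ↦
    norm_le_one_of_mem_steps (hσval k hk ω)
  have hX_meas : StronglyMeasurable[ℱ t] (X t) := by
    simp only [funext (hX t)]
    exact (Finset.measurable_fun_sum _ fun k hk ↦
      hadapted.measurable_le (Finset.mem_Icc.mp hk).2).stronglyMeasurable
  have hX_le : ∀ ω, ‖X t ω‖ ≤ t := fun ω ↦ by
    rw [hX]
    exact norm_sum_Icc_le (fun k hk ↦ hσ_le k hk ω) t
  have hX_succ : ∀ ω, X (t + 1) ω = X t ω + σ (t + 1) ω := fun ω ↦ by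
    rw [hX, hX, Finset.sum_Icc_succ_top (by omega)]
  have hcross :
      ∫ ω, dot2 (X t ω) (μ[σ (t + 1) | ℱ t] ω) ∂μ = γ / t * ∫ ω, nsq2 (X t ω) ∂μ := by
    rw [← integral_const_mul]
    refine integral_congr_ae ((hcond t ht).mono fun ω hω ↦ ?_)
    dsimp only
    rw [hω, smul_add, smul_smul, smul_smul, dot2_smul_add_smul_rotA]
    ring
  simp only [hX_succ]
  rw [integral_nsq2_add_condExp (ℱ.le t) hX_meas hadapted.measurable.stronglyMeasurable hX_le
    (hσ_le (t + 1) (by omega)), hcross]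
  ring
end
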